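/- arXiv:1401.4417 — 7 statements merged into one kernel-verified Lean document; each statement's English description precedes it below -/
import Mathlib

section
/- Let f(x) = B(x,x) + Lx + c be a quadratic vector field on ℝ^N, and let h ∈ ℝ. For any x ∈ ℝ^N such that the matrix I − (h/2)f'(x) is invertible, the vector x̃ := x + h (I − (h/2)f'(x))^{-1} f(x) is the unique solution of the Kahan discretization relation (x̃ − x)/h = B(x, x̃) + (1/2)L(x + x̃) + c. -/
section Kahan

variable {E : Type*} [AddCommGroup E] [Module ℝ E]

/-- The Kahan relation is linear in the increment `y = x̃ - x`, since
`B(x, x̃) = B(x, x) + B(x, y)` and `L(x + x̃)/2 = L x + L y / 2`. -/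
theorem kahan_relation_iff_linear (h : ℝ) (B : E →ₗ[ℝ] E →ₗ[ℝ] E) (L : E →ₗ[ℝ] E) (c x xt : E) :
    xt - x = h • (B x xt + (1 / 2 : ℝ) • L (x + xt) + c) ↔
      (LinearMap.id - (h / 2) • ((2 : ℝ) • B x + L) : E →ₗ[ℝ] E) (xt - x) =
        h • (B x x + L x + c) := by
  set y := xt - x
  have hxt : xt = x + y := (add_sub_cancel x xt).symm
  have hrhs : h • (B x xt + (1 / 2 : ℝ) • L (x + xt) + c)
      = h • (B x x + L x + c) + (h • B x y + (h / 2) • L y) := by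
    rw [hxt, map_add, map_add, map_add]
    module
  have hlhs : (LinearMap.id - (h / 2) • ((2 : ℝ) • B x + L) : E →ₗ[ℝ] E) y
      = y - (h • B x y + (h / 2) • L y) := by
    simp only [LinearMap.sub_apply, LinearMap.smul_apply, LinearMap.add_apply, LinearMap.id_apply]
    module
  rw [hrhs, hlhs]
  exact sub_eq_iff_eq_add.symm

theorem kahan_relation_iff (h : ℝ) (B : E →ₗ[ℝ] E →ₗ[ℝ] E) (L : E →ₗ[ℝ] E) (c x xt : E)
    (Minv : E →ₗ[ℝ] E)
    (hM1 : Minv ∘ₗ (LinearMap.id - (h / 2) • ((2 : ℝ) • B x + L)) = LinearMap.id)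
    (hM2 : (LinearMap.id - (h / 2) • ((2 : ℝ) • B x + L)) ∘ₗ Minv = LinearMap.id) :
    xt - x = h • (B x xt + (1 / 2 : ℝ) • L (x + xt) + c) ↔
      xt = x + h • Minv (B x x + L x + c) := by
  rw [kahan_relation_iff_linear, ← sub_eq_iff_eq_add', ← Minv.map_smul]
  exact (LinearEquiv.ofLinearMap _ Minv hM2 hM1 : E ≃ₗ[ℝ] E).eq_symm_apply.symm

end Kahan

theorem kahan_forward_explicit_general (N : ℕ) (h : ℝ)
    (B : (Fin N → ℝ) →ₗ[ℝ] (Fin N → ℝ) →ₗ[ℝ] (Fin N → ℝ))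
    (L : (Fin N → ℝ) →ₗ[ℝ] (Fin N → ℝ)) (c : Fin N → ℝ)
    (f : (Fin N → ℝ) → (Fin N → ℝ)) (hf : ∀ x, f x = B x x + L x + c)
    (x : Fin N → ℝ)
    (Minv : (Fin N → ℝ) →ₗ[ℝ] (Fin N → ℝ))
    (hM1 : Minv ∘ₗ (LinearMap.id - (h / 2) • ((2 : ℝ) • B x + L)) = LinearMap.id)
    (hM2 : (LinearMap.id - (h / 2) • ((2 : ℝ) • B x + L)) ∘ₗ Minv = LinearMap.id) :
    ((x + h • Minv (f x)) - x
        = h • (B x (x + h • Minv (f x)) + (1 / 2 : ℝ) • L (x + (x + h • Minv (f x))) + c))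
    ∧ (∀ xt : Fin N → ℝ,
        xt - x = h • (B x xt + (1 / 2 : ℝ) • L (x + xt) + c) →
        xt = x + h • Minv (f x)) := by
  rw [hf x]
  exact ⟨(kahan_relation_iff h B L c x _ Minv hM1 hM2).2 rfl,
    fun xt => (kahan_relation_iff h B L c x xt Minv hM1 hM2).1⟩

/-- Kahan's discretization of a quadratic vector field `f x = B x x + L x + c`
is the relation `(x̃ - x)/h = B(x, x̃) + (1/2) L (x + x̃) + c`.  If the matrix
`I - (h/2) f'(x)` is invertible (with two-sided inverse `Minv`), then
`x̃ := x + h Minv (f x)` is the unique solution of the Kahan relation. -/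
theorem kahan_forward_explicit (N : ℕ) (h : ℝ)
    (B : (Fin N → ℝ) →ₗ[ℝ] (Fin N → ℝ) →ₗ[ℝ] (Fin N → ℝ))
    (hB : ∀ u v, B u v = B v u)
    (L : (Fin N → ℝ) →ₗ[ℝ] (Fin N → ℝ)) (c : Fin N → ℝ)
    (f : (Fin N → ℝ) → (Fin N → ℝ)) (hf : ∀ x, f x = B x x + L x + c)
    (x : Fin N → ℝ)
    (Minv : (Fin N → ℝ) →ₗ[ℝ] (Fin N → ℝ))
    (hM1 : Minv ∘ₗ (LinearMap.id - (h / 2) • ((2 : ℝ) • B x + L)) = LinearMap.id)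
    (hM2 : (LinearMap.id - (h / 2) • ((2 : ℝ) • B x + L)) ∘ₗ Minv = LinearMap.id) :
    ((x + h • Minv (f x)) - x
        = h • (B x (x + h • Minv (f x)) + (1 / 2 : ℝ) • L (x + (x + h • Minv (f x))) + c))
    ∧ (∀ xt : Fin N → ℝ,
        xt - x = h • (B x xt + (1 / 2 : ℝ) • L (x + xt) + c) →
        xt = x + h • Minv (f x)) :=
  kahan_forward_explicit_general N h B L c f hf x Minv hM1 hM2
end

section
/- Let f(x) = B(x,x) + Lx + c be a quadratic vector field on ℝ^N, where B is a symmetric bilinear map, L is linear and c is constant. Then for all x, x̃ ∈ ℝ^N, the quadratic form appearing in Kahan's discretization satisfies B(x, x̃) + (1/2)L(x + x̃) + c = −(1/2)f(x) + 2 f((x + x̃)/2) − (1/2)f(x̃). Consequently Kahan's method coincides, for quadratic vector fields, with the Runge–Kutta method (x̃ − x)/h = −(1/2)f(x) + 2 f((x + x̃)/2) − (1/2)f(x̃). -/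
theorem kahan_form_eq_rungeKutta_combination {𝕜 M V : Type*} [Field 𝕜] [CharZero 𝕜]
    [AddCommGroup M] [Module 𝕜 M] [AddCommGroup V] [Module 𝕜 V]
    (B : M →ₗ[𝕜] M →ₗ[𝕜] V) (hB : ∀ u v, B u v = B v u) (L : M →ₗ[𝕜] V) (c : V)
    {f : M → V} (hf : ∀ x, f x = B x x + L x + c) (x xt : M) :
    B x xt + (1 / 2 : 𝕜) • L (x + xt) + c
      = -((1 / 2 : 𝕜) • f x) + (2 : 𝕜) • f ((1 / 2 : 𝕜) • (x + xt)) - (1 / 2 : 𝕜) • f xt := by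
  simp only [hf, map_add, map_smul, LinearMap.add_apply, LinearMap.smul_apply, hB xt x]
  module

/-- For a quadratic vector field `f x = B x x + L x + c` (with `B` symmetric bilinear),
the Kahan form satisfies `B x x̃ + (1/2) L (x + x̃) + c = -(1/2) f x + 2 f((x+x̃)/2) - (1/2) f x̃`
for all `x, x̃`; consequently Kahan's method coincides with the Runge–Kutta method
`(x̃ - x)/h = -(1/2) f x + 2 f((x+x̃)/2) - (1/2) f x̃` for quadratic vector fields. -/
theorem kahan_is_runge_kutta (N : ℕ)
    (B : (Fin N → ℝ) →ₗ[ℝ] (Fin N → ℝ) →ₗ[ℝ] (Fin N → ℝ))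
    (hB : ∀ u v, B u v = B v u)
    (L : (Fin N → ℝ) →ₗ[ℝ] (Fin N → ℝ)) (c : Fin N → ℝ)
    (f : (Fin N → ℝ) → (Fin N → ℝ)) (hf : ∀ x, f x = B x x + L x + c) :
    ∀ x xt : Fin N → ℝ,
      (B x xt + (1 / 2 : ℝ) • L (x + xt) + c
        = -((1 / 2 : ℝ) • f x) + (2 : ℝ) • f ((1 / 2 : ℝ) • (x + xt)) - (1 / 2 : ℝ) • f xt)
      ∧ ∀ h : ℝ,
          (xt - x = h • (B x xt + (1 / 2 : ℝ) • L (x + xt) + c)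
            ↔ xt - x = h • (-((1 / 2 : ℝ) • f x) + (2 : ℝ) • f ((1 / 2 : ℝ) • (x + xt))
                - (1 / 2 : ℝ) • f xt)) := by
  intro x xt
  have key := kahan_form_eq_rungeKutta_combination B hB L c hf x xt
  exact ⟨key, fun h => by rw [key]⟩
end

section
/- Let f(x) = B(x,x) + Lx + c be a quadratic vector field on ℝ^N, and let ℓ : ℝ^N → ℝ be a linear functional such that ℓ(f(x)) = 0 for all x ∈ ℝ^N (i.e., ℓ is a linear first integral of ẋ = f(x)). If x, x̃ ∈ ℝ^N satisfy the Kahan relation (x̃ − x)/h = B(x, x̃) + (1/2)L(x + x̃) + c for some h ∈ ℝ, then ℓ(x̃) = ℓ(x). Thus Kahan's method preserves all linear first integrals. -/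
/-!
The right-hand side `B x x̃ + ½ L (x + x̃) + c` of Kahan's scheme is the polarization of the
quadratic field `f`. As `B` is symmetric, it equals `2 f(m) - ½ f(x) - ½ f(x̃)` for the midpoint
`m = ½ (x + x̃)`, so every linear map annihilating `f` annihilates it, and applying `ℓ` to the
Kahan relation gives `ℓ x̃ - ℓ x = h • 0`.
-/

section KahanPolarization

variable {K V W U : Type*} [Field K] [NeZero (2 : K)]
  [AddCommGroup V] [Module K V] [AddCommGroup W] [Module K W] [AddCommGroup U] [Module K U]
  (B : V →ₗ[K] V →ₗ[K] W) (L : V →ₗ[K] W) (c : W)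

def kahanField (x y : V) : W :=
  B x y + (1 / 2 : K) • L (x + y) + c

theorem kahanField_self (x : V) : kahanField B L c x x = B x x + L x + c := by
  rw [kahanField, ← two_smul K x, map_smul, smul_smul, one_div, inv_mul_cancel₀ two_ne_zero,
    one_smul]

theorem kahanField_eq_diag_combination (hB : ∀ u v, B u v = B v u) (x y : V) :
    kahanField B L c x y =
      (2 : K) • kahanField B L c ((1 / 2 : K) • (x + y)) ((1 / 2 : K) • (x + y))
        - (1 / 2 : K) • kahanField B L c x x - (1 / 2 : K) • kahanField B L c y y := by
  simp only [kahanField, map_add, map_smul, LinearMap.add_apply, LinearMap.smul_apply, hB y x]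
  match_scalars <;> field_simp <;> ring

theorem map_kahanField_eq_zero (hB : ∀ u v, B u v = B v u) (ℓ : W →ₗ[K] U)
    (hℓ : ∀ x, ℓ (B x x + L x + c) = 0) (x y : V) : ℓ (kahanField B L c x y) = 0 := by
  rw [kahanField_eq_diag_combination B L c hB, kahanField_self, kahanField_self, kahanField_self,
    map_sub, map_sub, ℓ.map_smul, ℓ.map_smul, ℓ.map_smul, hℓ, hℓ, hℓ]
  simp only [smul_zero, sub_zero]

end KahanPolarization

/-- Kahan's method preserves linear first integrals: if `ℓ` is a linear functional
with `ℓ (f x) = 0` for all `x`, where `f x = B x x + L x + c` is quadratic, and `x, x̃`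
satisfy the Kahan relation `x̃ - x = h (B x x̃ + (1/2) L (x + x̃) + c)`, then `ℓ x̃ = ℓ x`. -/
theorem kahan_preserves_linear_first_integrals (N : ℕ) (h : ℝ)
    (B : (Fin N → ℝ) →ₗ[ℝ] (Fin N → ℝ) →ₗ[ℝ] (Fin N → ℝ))
    (hB : ∀ u v, B u v = B v u)
    (L : (Fin N → ℝ) →ₗ[ℝ] (Fin N → ℝ)) (c : Fin N → ℝ)
    (f : (Fin N → ℝ) → (Fin N → ℝ)) (hf : ∀ x, f x = B x x + L x + c)
    (ℓ : (Fin N → ℝ) →ₗ[ℝ] ℝ) (hfirst : ∀ x, ℓ (f x) = 0)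
    (x xt : Fin N → ℝ)
    (hrel : xt - x = h • (B x xt + (1 / 2 : ℝ) • L (x + xt) + c)) :
    ℓ xt = ℓ x := by
  have hpolar : ℓ (kahanField B L c x xt) = 0 :=
    map_kahanField_eq_zero B L c hB ℓ (fun y => hf y ▸ hfirst y) x xt
  have hstep := congrArg ℓ hrel
  rw [map_sub, map_smul, ← kahanField, hpolar, smul_zero] at hstep
  exact sub_eq_zero.mp hstep
end

section
/- Let U ⊆ ℝ² be an open set on which differentiable functions x̃(x,y), ỹ(x,y) satisfy Kahan's discretization of the Lotka–Volterra system: (x̃ − x)/h = (1/2)(x̃ + x − (x̃y + xỹ)) and (ỹ − y)/h = (1/2)(x̃y + xỹ − (ỹ + y)), for a fixed h ∈ ℝ. Assume that at each point of U the 2×2 matrix of partial derivatives of the two defining relations with respect to (x̃, ỹ) is invertible, and that xy ≠ 0 on U. Then the Jacobian determinant of the map φ : (x,y) ↦ (x̃, ỹ) satisfies det φ'(x,y) = (x̃ ỹ)/(x y) at every point of U; that is, φ preserves the symplectic form ω = (1/(xy)) dx ∧ dy. -/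
/-!
Write `F(p, q) = 0` for the two Kahan relations between `p = (x, y)` and `q = (x̃, ỹ)`.
Differentiating `F(p, φ p) = 0` gives `A · φ'(p) = B`, where `A = ∂F/∂q` and
`B = -∂F/∂p`; hence `det A · det φ'(p) = det B`. Each relation is linear in the new point:
`x̃ (1 - k + k y) = x (1 + k - k ỹ)` and `ỹ (1 + k - k x) = y (1 - k + k x̃)` with `k = h/2`.
Multiplying the two and adding `k² x y x̃ ỹ` to both sides gives `x y · det B = x̃ ỹ · det A`.
-/

open ContinuousLinearMap Filter Topology

theorem HasFDerivAt.comp_inr_comp_eq_neg_comp_inl_of_eventually_eq_zero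
    {𝕜 E F G : Type*} [NontriviallyNormedField 𝕜]
    [NormedAddCommGroup E] [NormedSpace 𝕜 E] [NormedAddCommGroup F] [NormedSpace 𝕜 F]
    [NormedAddCommGroup G] [NormedSpace 𝕜 G]
    {K : E × F → G} {K' : E × F →L[𝕜] G} {φ : E → F} {φ' : E →L[𝕜] F} {p : E}
    (hK : HasFDerivAt K K' (p, φ p)) (hφ : HasFDerivAt φ φ' p)
    (hzero : ∀ᶠ q in 𝓝 p, K (q, φ q) = 0) :
    (K'.comp (inr 𝕜 E F)).comp φ' = -K'.comp (inl 𝕜 E F) := by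
  have hcomp :
      HasFDerivAt (fun q ↦ K (q, φ q)) (K'.comp ((ContinuousLinearMap.id 𝕜 E).prod φ')) p :=
    hK.comp p ((hasFDerivAt_id p).prodMk hφ)
  have hconst : HasFDerivAt (fun q ↦ K (q, φ q)) (0 : E →L[𝕜] G) p :=
    (hasFDerivAt_const 0 p).congr_of_eventuallyEq hzero
  ext v
  have hv : K' (v, φ' v) = 0 := by simpa using congr($(hcomp.unique hconst) v)
  have hsplit := K'.map_add (v, 0) (0, φ' v)
  rw [Prod.mk_add_mk, add_zero, zero_add, hv] at hsplit
  simpa using eq_neg_of_add_eq_zero_right hsplit.symm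

namespace Matrix

noncomputable def toCLMFinTwoProd (M : Matrix (Fin 2) (Fin 2) ℝ) : ℝ × ℝ →L[ℝ] ℝ × ℝ :=
  (toLin (Module.Basis.finTwoProd ℝ) (Module.Basis.finTwoProd ℝ) M).toContinuousLinearMap

theorem toCLMFinTwoProd_of_apply (a b c d : ℝ) (v : ℝ × ℝ) :
    toCLMFinTwoProd !![a, b; c, d] v = (a * v.1 + b * v.2, c * v.1 + d * v.2) := by
  simp [toCLMFinTwoProd, toLin_apply, mul_comm]

theorem det_toCLMFinTwoProd (M : Matrix (Fin 2) (Fin 2) ℝ) : (toCLMFinTwoProd M).det = M.det :=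
  LinearMap.det_toLin _ M

end Matrix

open Matrix (toCLMFinTwoProd toCLMFinTwoProd_of_apply det_toCLMFinTwoProd)

noncomputable section

variable (h : ℝ)

def kahanResidual (p q : ℝ × ℝ) : ℝ × ℝ :=
  (q.1 - p.1 - h / 2 * (q.1 + p.1 - (q.1 * p.2 + p.1 * q.2)),
   q.2 - p.2 - h / 2 * (q.1 * p.2 + p.1 * q.2 - (q.2 + p.2)))

/-- `A = ∂F/∂q` -/
def kahanMatrixNext (p : ℝ × ℝ) : Matrix (Fin 2) (Fin 2) ℝ :=
  !![1 - (h / 2) * (1 - p.2), (h / 2) * p.1;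
     -((h / 2) * p.2), 1 - (h / 2) * (p.1 - 1)]

/-- `B = -∂F/∂p` -/
def kahanMatrixPrev (q : ℝ × ℝ) : Matrix (Fin 2) (Fin 2) ℝ :=
  !![1 + h / 2 * (1 - q.2), -(h / 2 * q.1);
     h / 2 * q.2, 1 + h / 2 * (q.1 - 1)]

variable {h}

theorem kahanResidual_eq_zero_iff {p q : ℝ × ℝ} :
    kahanResidual h p q = 0 ↔
      q.1 - p.1 = h / 2 * (q.1 + p.1 - (q.1 * p.2 + p.1 * q.2)) ∧
      q.2 - p.2 = h / 2 * (q.1 * p.2 + p.1 * q.2 - (q.2 + p.2)) := by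
  simp only [kahanResidual, Prod.ext_iff, Prod.fst_zero, Prod.snd_zero, sub_eq_zero]

theorem hasFDerivAt_kahanResidual (p q : ℝ × ℝ) :
    HasFDerivAt (Function.uncurry (kahanResidual h))
      ((toCLMFinTwoProd (kahanMatrixNext h p)).comp (snd ℝ _ _) -
        (toCLMFinTwoProd (kahanMatrixPrev h q)).comp (fst ℝ _ _)) (p, q) := by
  have hx := (hasFDerivAt_fst (𝕜 := ℝ) (p := (p, q))).fst
  have hy := (hasFDerivAt_fst (𝕜 := ℝ) (p := (p, q))).snd
  have hx' := (hasFDerivAt_snd (𝕜 := ℝ) (p := (p, q))).fst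
  have hy' := (hasFDerivAt_snd (𝕜 := ℝ) (p := (p, q))).snd
  refine (((hx'.sub hx).sub (((hx'.add hx).sub ((hx'.mul hy).add (hx.mul hy'))).const_mul
    (h / 2))).prodMk ((hy'.sub hy).sub ((((hx'.mul hy).add (hx.mul hy')).sub
    (hy'.add hy)).const_mul (h / 2)))).congr_fderiv ?_
  refine ContinuousLinearMap.ext fun ⟨u, v⟩ ↦ ?_
  simp only [ContinuousLinearMap.prod_apply, sub_apply, comp_apply, coe_snd', coe_fst', smul_apply,
    add_apply, smul_eq_mul, kahanMatrixNext, kahanMatrixPrev, toCLMFinTwoProd_of_apply,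
    Prod.mk_sub_mk, Prod.mk.injEq]
  constructor <;> ring

theorem toCLMFinTwoProd_kahanMatrixNext_comp {φ : ℝ × ℝ → ℝ × ℝ}
    {φ' : ℝ × ℝ →L[ℝ] ℝ × ℝ} {p : ℝ × ℝ} (hφ : HasFDerivAt φ φ' p)
    (hzero : ∀ᶠ q in 𝓝 p, kahanResidual h q (φ q) = 0) :
    (toCLMFinTwoProd (kahanMatrixNext h p)).comp φ' =
      toCLMFinTwoProd (kahanMatrixPrev h (φ p)) := by
  have := (hasFDerivAt_kahanResidual p (φ p)).comp_inr_comp_eq_neg_comp_inl_of_eventually_eq_zero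
    hφ hzero
  exact ContinuousLinearMap.ext fun v ↦ by simpa using congr($this v)

theorem det_kahanMatrixPrev_mul {p q : ℝ × ℝ} (hpq : kahanResidual h p q = 0) :
    (kahanMatrixPrev h q).det * (p.1 * p.2) = q.1 * q.2 * (kahanMatrixNext h p).det := by
  obtain ⟨r₁, r₂⟩ := kahanResidual_eq_zero_iff.mp hpq
  simp only [kahanMatrixPrev, kahanMatrixNext, Matrix.det_fin_two_of]
  linear_combination (-(q.2 * (1 + h / 2 - h / 2 * p.1))) * r₁ +
    (-(p.1 * (1 + h / 2 - h / 2 * q.2))) * r₂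

end

/-- Kahan's discretization of the Lotka–Volterra system is symplectic: if on an open
set `U` a differentiable map `φ : (x,y) ↦ (x̃,ỹ)` satisfies the Kahan relations
`x̃ - x = (h/2)(x̃ + x - (x̃y + xỹ))`, `ỹ - y = (h/2)(x̃y + xỹ - (ỹ + y))`, the 2×2
matrix of partial derivatives of the defining relations with respect to `(x̃,ỹ)` is
invertible on `U`, and `xy ≠ 0` on `U`, then `det φ'(x,y) = x̃ỹ/(xy)` on `U`, i.e.
`φ` preserves the symplectic form `ω = (1/(xy)) dx ∧ dy`. -/
theorem kahan_lotka_volterra_symplectic (h : ℝ) (U : Set (ℝ × ℝ)) (hU : IsOpen U)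
    (φ : ℝ × ℝ → ℝ × ℝ)
    (hrel : ∀ p ∈ U,
      (φ p).1 - p.1 = (h / 2) * ((φ p).1 + p.1 - ((φ p).1 * p.2 + p.1 * (φ p).2)) ∧
      (φ p).2 - p.2 = (h / 2) * ((φ p).1 * p.2 + p.1 * (φ p).2 - ((φ p).2 + p.2)))
    (hdiff : ∀ p ∈ U, DifferentiableAt ℝ φ p)
    (hmat : ∀ p ∈ U,
      (!![1 - (h / 2) * (1 - p.2), (h / 2) * p.1;
          -((h / 2) * p.2), 1 - (h / 2) * (p.1 - 1)] : Matrix (Fin 2) (Fin 2) ℝ).det ≠ 0)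
    (hxy : ∀ p ∈ U, p.1 * p.2 ≠ 0) :
    ∀ p ∈ U, (fderiv ℝ φ p).det = (φ p).1 * (φ p).2 / (p.1 * p.2) := by
  intro p hp
  have hzero : ∀ᶠ q in 𝓝 p, kahanResidual h q (φ q) = 0 :=
    eventually_of_mem (hU.mem_nhds hp) fun q hq ↦ kahanResidual_eq_zero_iff.mpr (hrel q hq)
  have hdet :
      (kahanMatrixNext h p).det * (fderiv ℝ φ p).det = (kahanMatrixPrev h (φ p)).det := by
    rw [← det_toCLMFinTwoProd, ← det_toCLMFinTwoProd, ← LinearMap.det_comp, ← toLinearMap_comp,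
      toCLMFinTwoProd_kahanMatrixNext_comp (hdiff p hp).hasFDerivAt hzero]
  have hnext : (kahanMatrixNext h p).det ≠ 0 := hmat p hp
  rw [eq_div_iff (hxy p hp)]
  refine mul_left_cancel₀ hnext ?_
  rw [← mul_assoc, hdet, det_kahanMatrixPrev_mul hzero.self_of_nhds]
  ring
end

section
/- Consider the general discrete Lotka–Volterra system (x̃ − x)/h = a x + (1−a) x̃ − (b xy + c x̃ỹ + d xỹ + e x̃y), (ỹ − y)/h = −A y − (1−A) ỹ + (B xy + C x̃ỹ + D xỹ + E x̃y), with b + c + d + e = 1 = B + C + D + E and parameters independent of h. If b = 0 and either c + d = 1 or B = 0, then there exist rational functions S₁, S₂ ∈ ℝ(x̃, ỹ) such that, on a nonempty Zariski-open subset of the (x̃,ỹ)-plane, the unique solution of the system for the unshifted variables is x = S₁(x̃,ỹ), y = S₂(x̃,ỹ); i.e., the inverse map (x̃,ỹ) ↦ (x,y) is rational. -/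
/-- The general non-standard discretization of the Lotka–Volterra system
`ẋ = x(1-y)`, `ẏ = y(x-1)` with step `h` and parameter list `{a,b,c,d,e,A,B,C,D,E}`. -/
def lvSys (h a b c d e A B C D E x y xt yt : ℝ) : Prop :=
  xt - x = h * (a * x + (1 - a) * xt
      - (b * x * y + c * xt * yt + d * x * yt + e * xt * y)) ∧
  yt - y = h * (-(A * y) - (1 - A) * yt
      + (B * x * y + C * xt * yt + D * x * yt + E * xt * y))

/-!
With `b = 0` the first equation is linear in `(x, y)` and the second is linear in `y` once `x`
is fixed, the only nonlinear term being `h B x y`. If `B = 0` the system is linear and Cramer's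
rule inverts it. If `c + d = 1`, then `e = 0`, the first equation determines `x` alone, and
substituting it into the second (multiplied by the coefficient of `x`) again leaves a linear
system. In both cases the determinant evaluates to a product of `1 + h a` and `1 - h A` at the
origin, which is nonzero for small `h`.
-/

open MvPolynomial Topology

def HasRationalSolution {K : Type*} [Field K] (F : K → K → K → K → Prop) : Prop :=
  ∃ S₁ T₁ S₂ T₂ W : MvPolynomial (Fin 2) K, W ≠ 0 ∧
    ∀ xt yt : K, eval ![xt, yt] W ≠ 0 →
      eval ![xt, yt] T₁ ≠ 0 ∧ eval ![xt, yt] T₂ ≠ 0 ∧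
      ∀ x y : K, F x y xt yt ↔
        (x = eval ![xt, yt] S₁ / eval ![xt, yt] T₁ ∧ y = eval ![xt, yt] S₂ / eval ![xt, yt] T₂)

section Field

variable {K : Type*} [Field K]

theorem cramer_iff_of_det_ne_zero {p q r s t u x y : K} (hdet : p * t - q * s ≠ 0) :
    (p * x + q * y = r ∧ s * x + t * y = u) ↔
      (x = (r * t - q * u) / (p * t - q * s) ∧ y = (p * u - r * s) / (p * t - q * s)) := by
  rw [eq_div_iff hdet, eq_div_iff hdet]
  constructor
  · rintro ⟨h₁, h₂⟩
    exact ⟨by linear_combination t * h₁ - q * h₂, by linear_combination p * h₂ - s * h₁⟩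
  · rintro ⟨hx, hy⟩
    refine ⟨mul_right_cancel₀ hdet ?_, mul_right_cancel₀ hdet ?_⟩
    · linear_combination p * hx + q * hy
    · linear_combination s * hx + t * hy

theorem triangular_iff_of_ne_zero {p r α β γ δ x y : K} (hp : p ≠ 0) :
    (p * x + 0 * y = r ∧ γ * x + (α + β * x) * y = δ) ↔
      (p * x + 0 * y = r ∧ (p * γ) * x + (p * α + β * r) * y = p * δ) := by
  refine and_congr_right fun h₁ => ⟨fun h₂ => ?_, fun h₂ => mul_left_cancel₀ hp ?_⟩
  · linear_combination p * h₂ - β * y * h₁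
  · linear_combination h₂ + β * y * h₁

theorem HasRationalSolution.of_linear {F : K → K → K → K → Prop}
    (p q r s t u : MvPolynomial (Fin 2) K) (hdet : p * t - q * s ≠ 0)
    (hF : ∀ xt yt : K, eval ![xt, yt] (p * t - q * s) ≠ 0 → ∀ x y : K, F x y xt yt ↔
      (eval ![xt, yt] p * x + eval ![xt, yt] q * y = eval ![xt, yt] r ∧
        eval ![xt, yt] s * x + eval ![xt, yt] t * y = eval ![xt, yt] u)) :
    HasRationalSolution F := by
  refine ⟨r * t - q * u, p * t - q * s, p * u - r * s, p * t - q * s, p * t - q * s, hdet,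
    fun xt yt hW => ⟨hW, hW, fun x y => ?_⟩⟩
  rw [hF xt yt hW]
  simp only [map_sub, map_mul] at hW ⊢
  exact cramer_iff_of_det_ne_zero hW

end Field

namespace LotkaVolterra

variable (h a c d e A B C D E : ℝ)

noncomputable def coeffX₁ : MvPolynomial (Fin 2) ℝ :=
  MvPolynomial.C (1 + h * a) - MvPolynomial.C (h * d) * X 1

noncomputable def coeffY₁ : MvPolynomial (Fin 2) ℝ :=
  -(MvPolynomial.C (h * e) * X 0)

noncomputable def rhs₁ : MvPolynomial (Fin 2) ℝ :=
  MvPolynomial.C (1 - h * (1 - a)) * X 0 + MvPolynomial.C (h * c) * X 0 * X 1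

noncomputable def coeffX₂ : MvPolynomial (Fin 2) ℝ :=
  MvPolynomial.C (h * D) * X 1

noncomputable def coeffY₂ : MvPolynomial (Fin 2) ℝ :=
  MvPolynomial.C (1 - h * A) + MvPolynomial.C (h * E) * X 0

noncomputable def rhs₂ : MvPolynomial (Fin 2) ℝ :=
  MvPolynomial.C (1 + h * (1 - A)) * X 1 - MvPolynomial.C (h * C) * X 0 * X 1

theorem lvSys_zero_iff (x y xt yt : ℝ) :
    lvSys h a 0 c d e A B C D E x y xt yt ↔
      (eval ![xt, yt] (coeffX₁ h a d) * x + eval ![xt, yt] (coeffY₁ h e) * y =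
          eval ![xt, yt] (rhs₁ h a c) ∧
        eval ![xt, yt] (coeffX₂ h D) * x + (eval ![xt, yt] (coeffY₂ h A E) + h * B * x) * y =
          eval ![xt, yt] (rhs₂ h A C)) := by
  simp only [lvSys, coeffX₁, coeffY₁, rhs₁, coeffX₂, coeffY₂, rhs₂, map_add, map_sub, map_mul,
    map_neg, eval_C, eval_X, Matrix.cons_val_zero, Matrix.cons_val_one]
  constructor
  · rintro ⟨h₁, h₂⟩
    exact ⟨by linear_combination -h₁, by linear_combination -h₂⟩
  · rintro ⟨h₁, h₂⟩
    exact ⟨by linear_combination -h₁, by linear_combination -h₂⟩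

end LotkaVolterra

theorem eventually_one_add_mul_ne_zero_and_one_sub_mul_ne_zero (a A : ℝ) :
    ∀ᶠ h in 𝓝 (0 : ℝ), 1 + h * a ≠ 0 ∧ 1 - h * A ≠ 0 :=
  (ContinuousAt.eventually_ne (by fun_prop) (by simp)).and
    (ContinuousAt.eventually_ne (by fun_prop) (by simp))

open LotkaVolterra in
theorem lv_backward_rational_general (a b c d e A B C D E : ℝ)
    (hcon1 : b + c + d + e = 1)
    (hb : b = 0) (hcdB : c + d = 1 ∨ B = 0) :
    ∃ h₀ : ℝ, 0 < h₀ ∧ ∀ h : ℝ, h ≠ 0 → |h| < h₀ →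
      ∃ S₁ T₁ S₂ T₂ W : MvPolynomial (Fin 2) ℝ, W ≠ 0 ∧
        ∀ xt yt : ℝ, MvPolynomial.eval ![xt, yt] W ≠ 0 →
          MvPolynomial.eval ![xt, yt] T₁ ≠ 0 ∧
          MvPolynomial.eval ![xt, yt] T₂ ≠ 0 ∧
          ∀ x y : ℝ,
            lvSys h a b c d e A B C D E x y xt yt ↔
              (x = MvPolynomial.eval ![xt, yt] S₁ / MvPolynomial.eval ![xt, yt] T₁ ∧
               y = MvPolynomial.eval ![xt, yt] S₂ / MvPolynomial.eval ![xt, yt] T₂) := by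
  obtain ⟨h₀, h₀_pos, hsmall⟩ :=
    Metric.eventually_nhds_iff.1 (eventually_one_add_mul_ne_zero_and_one_sub_mul_ne_zero a A)
  refine ⟨h₀, h₀_pos, fun h _ hh => ?_⟩
  obtain ⟨ha, hA⟩ := hsmall (by rwa [Real.dist_0_eq_abs])
  subst hb
  change HasRationalSolution fun x y xt yt => lvSys h a 0 c d e A B C D E x y xt yt
  rcases hcdB with hcd | rfl
  · obtain rfl : e = 0 := by linarith
    refine .of_linear (coeffX₁ h a d) 0 (rhs₁ h a c) (coeffX₁ h a d * coeffX₂ h D)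
      (coeffX₁ h a d * coeffY₂ h A E + MvPolynomial.C (h * B) * rhs₁ h a c)
      (coeffX₁ h a d * rhs₂ h A C)
      (ne_of_apply_ne constantCoeff ?_) fun xt yt hdet x y => ?_
    · simp [coeffX₁, coeffY₂, rhs₁, ha, hA]
    · simp only [map_mul, zero_mul, sub_zero, mul_ne_zero_iff] at hdet
      rw [lvSys_zero_iff, show coeffY₁ h 0 = 0 by simp [coeffY₁]]
      simp only [map_mul, map_add, eval_C, map_zero]
      exact triangular_iff_of_ne_zero hdet.1
  · refine .of_linear (coeffX₁ h a d) (coeffY₁ h e) (rhs₁ h a c) (coeffX₂ h D) (coeffY₂ h A E)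
      (rhs₂ h A C) (ne_of_apply_ne constantCoeff ?_) fun xt yt _ x y => ?_
    · simp [coeffX₁, coeffY₁, coeffY₂, ha, hA]
    · simpa only [mul_zero, zero_mul, add_zero] using lvSys_zero_iff h a c d e A 0 C D E x y xt yt

/-- If `b = 0` and either `c + d = 1` or `B = 0` (the vanishing of the leading
coefficient `p̃₂` of the quadratic obtained by eliminating `x`), then for all
sufficiently small nonzero `h` the inverse map of the general discrete Lotka–Volterra
system is rational: there are rational functions `S₁ = S₁'/T₁`, `S₂ = S₂'/T₂` in
`(x̃,ỹ)` such that on a nonempty Zariski-open subset of the `(x̃,ỹ)`-plane the unique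
solution of the system for the unshifted variables is `x = S₁(x̃,ỹ)`, `y = S₂(x̃,ỹ)`. -/
theorem lv_backward_rational (a b c d e A B C D E : ℝ)
    (hcon1 : b + c + d + e = 1) (hcon2 : B + C + D + E = 1)
    (hb : b = 0) (hcdB : c + d = 1 ∨ B = 0) :
    ∃ h₀ : ℝ, 0 < h₀ ∧ ∀ h : ℝ, h ≠ 0 → |h| < h₀ →
      ∃ S₁ T₁ S₂ T₂ W : MvPolynomial (Fin 2) ℝ, W ≠ 0 ∧
        ∀ xt yt : ℝ, MvPolynomial.eval ![xt, yt] W ≠ 0 →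
          MvPolynomial.eval ![xt, yt] T₁ ≠ 0 ∧
          MvPolynomial.eval ![xt, yt] T₂ ≠ 0 ∧
          ∀ x y : ℝ,
            lvSys h a b c d e A B C D E x y xt yt ↔
              (x = MvPolynomial.eval ![xt, yt] S₁ / MvPolynomial.eval ![xt, yt] T₁ ∧
               y = MvPolynomial.eval ![xt, yt] S₂ / MvPolynomial.eval ![xt, yt] T₂) :=
  lv_backward_rational_general a b c d e A B C D E hcon1 hb hcdB
end

section
/- The general discrete Lotka–Volterra system (x̃ − x)/h = a x + (1−a) x̃ − (b xy + c x̃ỹ + d xỹ + e x̃y), (ỹ − y)/h = −A y − (1−A) ỹ + (B xy + C x̃ỹ + D xỹ + E x̃y), with constraints b + c + d + e = 1 = B + C + D + E and parameters independent of h, defines a birational map of the plane (for all sufficiently small h ≠ 0) if and only if the parameters {a,b,c,d,e,A,B,C,D,E} belong to one of the following seven families: (i) {a,0,0,d,e,A,0,0,D,E} with d+e = 1 = D+E; (ii) {a,0,0,1,0,A,B,0,D,E} with B+D+E = 1; (iii) {a,0,0,0,1,A,0,C,D,E} with C+D+E = 1; (iv) {a,b,0,d,e,A,0,0,0,1} with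 b+d+e = 1; (v) {a,0,c,d,e,A,0,0,1,0} with c+d+e = 1; (vi) {a,0,c,d,0,A,B,0,D,0} with c+d = 1 = B+D; (vii) {a,b,0,0,e,A,0,C,0,E} with b+e = 1 = C+E. -/
/-- The forward map `(x,y) ↦ (x̃,ỹ)` of the discrete system is rational: on a
nonempty Zariski-open subset of the `(x,y)`-plane the system has the unique solution
`x̃ = P₁/Q₁`, `ỹ = P₂/Q₂` for some polynomials. -/
def lvForwardRational (h a b c d e A B C D E : ℝ) : Prop :=
  ∃ P₁ Q₁ P₂ Q₂ W : MvPolynomial (Fin 2) ℝ, W ≠ 0 ∧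
    ∀ x y : ℝ, MvPolynomial.eval ![x, y] W ≠ 0 →
      MvPolynomial.eval ![x, y] Q₁ ≠ 0 ∧
      MvPolynomial.eval ![x, y] Q₂ ≠ 0 ∧
      ∀ xt yt : ℝ,
        lvSys h a b c d e A B C D E x y xt yt ↔
          (xt = MvPolynomial.eval ![x, y] P₁ / MvPolynomial.eval ![x, y] Q₁ ∧
           yt = MvPolynomial.eval ![x, y] P₂ / MvPolynomial.eval ![x, y] Q₂)

/-- The inverse map `(x̃,ỹ) ↦ (x,y)` of the discrete system is rational: on a
nonempty Zariski-open subset of the `(x̃,ỹ)`-plane the system has the unique solution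
`x = S₁/T₁`, `y = S₂/T₂` for some polynomials. -/
def lvBackwardRational (h a b c d e A B C D E : ℝ) : Prop :=
  ∃ S₁ T₁ S₂ T₂ W : MvPolynomial (Fin 2) ℝ, W ≠ 0 ∧
    ∀ xt yt : ℝ, MvPolynomial.eval ![xt, yt] W ≠ 0 →
      MvPolynomial.eval ![xt, yt] T₁ ≠ 0 ∧
      MvPolynomial.eval ![xt, yt] T₂ ≠ 0 ∧
      ∀ x y : ℝ,
        lvSys h a b c d e A B C D E x y xt yt ↔
          (x = MvPolynomial.eval ![xt, yt] S₁ / MvPolynomial.eval ![xt, yt] T₁ ∧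
           y = MvPolynomial.eval ![xt, yt] S₂ / MvPolynomial.eval ![xt, yt] T₂)

/-!
One step of the scheme, in either direction, is a pair of equations that are each bilinear in the
unknowns: with `u = x̃`, `v = ỹ` it reads `u (p + k v) = q - l v`, `v (r - m u) = s + n u`, where
`p, q, l, r, s, n` are polynomials in `(x, y)` and `k = h c`, `m = h C`. Eliminating `u` leaves a
quadratic `Q` in `v`. At a generic point `Q` has two distinct roots, and every root with
`p + k v ≠ 0` yields a solution; since `k² Q(-p/k) = (m p - k n)(l p + k q)`, the map is
single-valued only if `k r + m l`, `m p - k n` or `l p + k q` vanishes identically (the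
discriminant does not, at small `h`). For two different small steps `h` this forces
`C = E = 0`, `c = C = 0` or `c = d = 0`; conversely in each of these cases one equation is free of
one unknown, or both are linear, and the solution is an explicit rational function.
The inverse map is the forward map of the scheme with step `-h` and the roles of
`(a, b, c, d, e, A, B, C, D, E)` and `(1 - a, c, b, e, d, 1 - A, C, B, E, D)` exchanged, which gives
`B = D = 0`, `b = B = 0` or `b = e = 0`. Of the nine combinations, two violate
`b + c + d + e = 1 = B + C + D + E` and the other seven are the seven families.
-/

open MvPolynomial Filter Topology

theorem exists_quadratic_eq_zero_ne {K : Type*} [Field K] {a b c x : K} (ha : a ≠ 0)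
    (hΔ : discrim a b c ≠ 0) (hx : a * (x * x) + b * x + c = 0) :
    ∃ y, a * (y * y) + b * y + c = 0 ∧ y ≠ x := by
  have hx' : 2 * a * x + b ≠ 0 := fun h₀ =>
    hΔ (by rw [discrim_eq_sq_of_quadratic_eq_zero hx, h₀]; ring)
  refine ⟨-b / a - x, ?_, fun hy => hx' ?_⟩
  · field_simp
    linear_combination a * hx
  · field_simp at hy
    linear_combination -hy

theorem MvPolynomial.exists_eval_ne_zero {ι K : Type*} [Field K] [Infinite K]
    {P : MvPolynomial ι K} (hP : P ≠ 0) : ∃ z, eval z P ≠ 0 := by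
  by_contra! h
  exact hP (MvPolynomial.funext fun z => by simp [h z])

theorem Filter.Eventually.exists_pair_ne {X : Type*} [TopologicalSpace X] [T1Space X] {x : X}
    [(𝓝[≠] x).NeBot] {P : X → Prop} (hP : ∀ᶠ y in 𝓝[≠] x, P y) :
    ∃ y₁ y₂, y₁ ≠ y₂ ∧ P y₁ ∧ P y₂ := by
  obtain ⟨y₁, hy₁, hx⟩ := (hP.and eventually_mem_nhdsWithin).exists
  obtain ⟨y₂, hy₂, hne⟩ :=
    (hP.and (eventually_nhdsWithin_of_eventually_nhds (eventually_ne_nhds (Ne.symm hx)))).exists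
  exact ⟨y₁, y₂, hne.symm, hy₁, hy₂⟩

open scoped Pointwise in
theorem Filter.Eventually.comp_neg_nhdsNE_zero {G : Type*} [TopologicalSpace G] [AddGroup G]
    [ContinuousNeg G] {P : G → Prop} (hP : ∀ᶠ x in 𝓝[≠] (0 : G), P x) :
    ∀ᶠ x in 𝓝[≠] (0 : G), P (-x) := by
  show ∀ᶠ x in -𝓝[≠] (0 : G), P x
  rwa [Filter.neg_nhdsNE, neg_zero]

theorem eventually_nhdsNE_zero_iff {P : ℝ → Prop} :
    (∀ᶠ h in 𝓝[≠] (0 : ℝ), P h) ↔ ∃ h₀, 0 < h₀ ∧ ∀ h, h ≠ 0 → |h| < h₀ → P h := by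
  rw [eventually_nhdsWithin_iff, Metric.eventually_nhds_iff]
  simp only [Real.dist_0_eq_abs, Set.mem_compl_singleton_iff]
  exact exists_congr fun _ => and_congr_right fun _ => forall_congr' fun _ => imp.swap

structure BilinearSystem (R : Type*) where
  p : R
  q : R
  k : R
  l : R
  r : R
  s : R
  m : R
  n : R

namespace BilinearSystem

section CommRing

variable {R S : Type*} [CommRing R] [CommRing S] (σ : BilinearSystem R)

def IsSolution (u v : R) : Prop :=
  u * (σ.p + σ.k * v) = σ.q - σ.l * v ∧ v * (σ.r - σ.m * u) = σ.s + σ.n * u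

@[simps]
def map (f : R →+* S) : BilinearSystem S :=
  ⟨f σ.p, f σ.q, f σ.k, f σ.l, f σ.r, f σ.s, f σ.m, f σ.n⟩

/-- Eliminating `u` leaves the quadratic `quadA * v ^ 2 + quadB * v + quadC` in `v`. -/
def quadA : R := σ.k * σ.r + σ.m * σ.l

def quadB : R := σ.r * σ.p - σ.m * σ.q - σ.k * σ.s + σ.n * σ.l

def quadC : R := -(σ.s * σ.p + σ.n * σ.q)

def discr : R := discrim σ.quadA σ.quadB σ.quadC

@[simp] lemma quadA_map (f : R →+* S) : (σ.map f).quadA = f σ.quadA := by simp [quadA]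

@[simp] lemma quadB_map (f : R →+* S) : (σ.map f).quadB = f σ.quadB := by simp [quadB]

@[simp] lemma quadC_map (f : R →+* S) : (σ.map f).quadC = f σ.quadC := by simp [quadC]

@[simp] lemma discr_map (f : R →+* S) : (σ.map f).discr = f σ.discr := by
  simp [discr, discrim, map_ofNat]

end CommRing

section Field

variable {K : Type*} [Field K] {σ : BilinearSystem K} {u v : K}

theorem IsSolution.quadratic_eq_zero (h : σ.IsSolution u v) :
    σ.quadA * (v * v) + σ.quadB * v + σ.quadC = 0 := by
  obtain ⟨h₁, h₂⟩ := h
  simp only [quadA, quadB, quadC]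
  linear_combination (σ.p + σ.k * v) * h₂ + (σ.m * v + σ.n) * h₁

theorem isSolution_of_quadratic_eq_zero (hv : σ.quadA * (v * v) + σ.quadB * v + σ.quadC = 0)
    (hw : σ.p + σ.k * v ≠ 0) : σ.IsSolution ((σ.q - σ.l * v) / (σ.p + σ.k * v)) v := by
  refine ⟨div_mul_cancel₀ _ hw, mul_left_cancel₀ hw ?_⟩
  simp only [quadA, quadB, quadC] at hv
  field_simp
  linear_combination hv

/-- `k² Q(v) - (m p - k n) (l p + k q)` is a multiple of `p + k v`. -/
theorem p_add_k_mul_ne_zero (hv : σ.quadA * (v * v) + σ.quadB * v + σ.quadC = 0)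
    (hσ : (σ.m * σ.p - σ.k * σ.n) * (σ.l * σ.p + σ.k * σ.q) ≠ 0) : σ.p + σ.k * v ≠ 0 := by
  intro hw
  apply hσ
  linear_combination (norm := (simp only [quadA, quadB, quadC]; ring))
    σ.k ^ 2 * hv - (σ.quadA * (σ.k * v - σ.p) + σ.quadB * σ.k) * hw

theorem IsSolution.exists_isSolution_ne (h : σ.IsSolution u v) (hA : σ.quadA ≠ 0)
    (hΔ : σ.discr ≠ 0) (hσ : (σ.m * σ.p - σ.k * σ.n) * (σ.l * σ.p + σ.k * σ.q) ≠ 0) :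
    ∃ u' v', σ.IsSolution u' v' ∧ v' ≠ v := by
  obtain ⟨v', hv', hne⟩ := exists_quadratic_eq_zero_ne hA hΔ h.quadratic_eq_zero
  exact ⟨_, v', isSolution_of_quadratic_eq_zero hv' (p_add_k_mul_ne_zero hv' hσ), hne⟩

theorem isSolution_iff_of_m_n (hm : σ.m = 0) (hn : σ.n = 0) (hr : σ.r ≠ 0)
    (hd : σ.p * σ.r + σ.k * σ.s ≠ 0) :
    σ.IsSolution u v ↔
      u = (σ.q * σ.r - σ.l * σ.s) / (σ.p * σ.r + σ.k * σ.s) ∧ v = σ.s / σ.r := by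
  simp only [IsSolution, hm, hn, zero_mul, sub_zero, add_zero, eq_div_iff hd, eq_div_iff hr]
  refine ⟨fun ⟨h₁, h₂⟩ => ⟨?_, h₂⟩, fun ⟨h₁, h₂⟩ => ⟨mul_right_cancel₀ hr ?_, h₂⟩⟩
  · linear_combination σ.r * h₁ - (u * σ.k + σ.l) * h₂
  · linear_combination h₁ + (u * σ.k + σ.l) * h₂

theorem isSolution_iff_of_k_l (hk : σ.k = 0) (hl : σ.l = 0) (hp : σ.p ≠ 0)
    (hd : σ.r * σ.p - σ.m * σ.q ≠ 0) :
    σ.IsSolution u v ↔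
      u = σ.q / σ.p ∧ v = (σ.s * σ.p + σ.n * σ.q) / (σ.r * σ.p - σ.m * σ.q) := by
  simp only [IsSolution, hk, hl, zero_mul, sub_zero, add_zero, eq_div_iff hd, eq_div_iff hp]
  refine ⟨fun ⟨h₁, h₂⟩ => ⟨h₁, ?_⟩, fun ⟨h₁, h₂⟩ => ⟨h₁, mul_left_cancel₀ hp ?_⟩⟩
  · linear_combination σ.p * h₂ + (v * σ.m + σ.n) * h₁
  · linear_combination h₂ - (v * σ.m + σ.n) * h₁

theorem isSolution_iff_of_k_m (hk : σ.k = 0) (hm : σ.m = 0)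
    (hd : σ.p * σ.r + σ.l * σ.n ≠ 0) :
    σ.IsSolution u v ↔
      u = (σ.q * σ.r - σ.l * σ.s) / (σ.p * σ.r + σ.l * σ.n) ∧
        v = (σ.p * σ.s + σ.n * σ.q) / (σ.p * σ.r + σ.l * σ.n) := by
  simp only [IsSolution, hk, hm, zero_mul, sub_zero, add_zero, eq_div_iff hd]
  refine ⟨fun ⟨h₁, h₂⟩ => ⟨?_, ?_⟩,
    fun ⟨h₁, h₂⟩ => ⟨mul_right_cancel₀ hd ?_, mul_right_cancel₀ hd ?_⟩⟩
  · linear_combination σ.r * h₁ - σ.l * h₂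
  · linear_combination σ.p * h₂ + σ.n * h₁
  · linear_combination σ.p * h₁ + σ.l * h₂
  · linear_combination σ.r * h₂ - σ.n * h₁

end Field

section Polynomial

variable {ι K : Type*} [Field K] (σ : BilinearSystem (MvPolynomial ι K))

def IsRationallySolvable : Prop :=
  ∃ P₁ Q₁ P₂ Q₂ W : MvPolynomial ι K, W ≠ 0 ∧ ∀ z, eval z W ≠ 0 →
    eval z Q₁ ≠ 0 ∧ eval z Q₂ ≠ 0 ∧ ∀ u v, (σ.map (eval z)).IsSolution u v ↔
      u = eval z P₁ / eval z Q₁ ∧ v = eval z P₂ / eval z Q₂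

variable {σ}

theorem IsRationallySolvable.degenerate [Infinite K] (hσ : σ.IsRationallySolvable) :
    σ.quadA = 0 ∨ σ.discr = 0 ∨ σ.m * σ.p - σ.k * σ.n = 0 ∨ σ.l * σ.p + σ.k * σ.q = 0 := by
  obtain ⟨P₁, Q₁, P₂, Q₂, W, hW, hsol⟩ := hσ
  by_contra! hnd
  obtain ⟨hA, hΔ, hmk, hlk⟩ := hnd
  obtain ⟨z, hz⟩ := exists_eval_ne_zero
    (mul_ne_zero (mul_ne_zero (mul_ne_zero hW hA) hΔ) (mul_ne_zero hmk hlk))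
  simp only [map_mul, mul_ne_zero_iff] at hz
  obtain ⟨⟨⟨hWz, hAz⟩, hΔz⟩, hmkz, hlkz⟩ := hz
  obtain ⟨-, -, huniq⟩ := hsol z hWz
  obtain ⟨u, v, huv, hne⟩ := ((huniq _ _).2 ⟨rfl, rfl⟩).exists_isSolution_ne
    (by simpa using hAz) (by simpa using hΔz) (by simpa using mul_ne_zero hmkz hlkz)
  exact hne ((huniq u v).1 huv).2

theorem isRationallySolvable_of_forall_isSolution_iff (P₁ Q₁ P₂ Q₂ : MvPolynomial ι K)
    (hQ : Q₁ * Q₂ ≠ 0)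
    (h : ∀ z, eval z Q₁ ≠ 0 → eval z Q₂ ≠ 0 → ∀ u v, (σ.map (eval z)).IsSolution u v ↔
      u = eval z P₁ / eval z Q₁ ∧ v = eval z P₂ / eval z Q₂) :
    σ.IsRationallySolvable := by
  refine ⟨P₁, Q₁, P₂, Q₂, Q₁ * Q₂, hQ, fun z hz => ?_⟩
  rw [map_mul, mul_ne_zero_iff] at hz
  exact ⟨hz.1, hz.2, h z hz.1 hz.2⟩

theorem isRationallySolvable_of_m_n (hm : σ.m = 0) (hn : σ.n = 0) (hr : σ.r ≠ 0)
    (hd : σ.p * σ.r + σ.k * σ.s ≠ 0) : σ.IsRationallySolvable :=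
  isRationallySolvable_of_forall_isSolution_iff (σ.q * σ.r - σ.l * σ.s) _ σ.s σ.r
    (mul_ne_zero hd hr) fun z hd hr _ _ => by
      simp only [map_mul, map_add, map_sub] at hd ⊢
      exact isSolution_iff_of_m_n (by simp [hm]) (by simp [hn]) hr hd

theorem isRationallySolvable_of_k_l (hk : σ.k = 0) (hl : σ.l = 0) (hp : σ.p ≠ 0)
    (hd : σ.r * σ.p - σ.m * σ.q ≠ 0) : σ.IsRationallySolvable :=
  isRationallySolvable_of_forall_isSolution_iff σ.q σ.p (σ.s * σ.p + σ.n * σ.q) _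
    (mul_ne_zero hp hd) fun z hp hd _ _ => by
      simp only [map_mul, map_add, map_sub] at hd ⊢
      exact isSolution_iff_of_k_l (by simp [hk]) (by simp [hl]) hp hd

theorem isRationallySolvable_of_k_m (hk : σ.k = 0) (hm : σ.m = 0)
    (hd : σ.p * σ.r + σ.l * σ.n ≠ 0) : σ.IsRationallySolvable :=
  isRationallySolvable_of_forall_isSolution_iff (σ.q * σ.r - σ.l * σ.s) _
    (σ.p * σ.s + σ.n * σ.q) _ (mul_ne_zero hd hd) fun z hd _ _ _ => by
      simp only [map_mul, map_add, map_sub] at hd ⊢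
      exact isSolution_iff_of_k_m (by simp [hk]) (by simp [hm]) hd

end Polynomial

end BilinearSystem

open BilinearSystem

section LotkaVolterra

variable {h a b c d e A B C D E : ℝ}

/-- The step `(x, y) ↦ (x̃, ỹ)` as a bilinear system in `(x̃, ỹ)` with coefficients polynomial in
`(x, y) = (X 0, X 1)`. -/
noncomputable def lvSystem (h a b c d e A B C D E : ℝ) :
    BilinearSystem (MvPolynomial (Fin 2) ℝ) where
  p := MvPolynomial.C (1 - h * (1 - a)) + MvPolynomial.C (h * e) * X 1
  q := MvPolynomial.C (1 + h * a) * X 0 - MvPolynomial.C (h * b) * (X 0 * X 1)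
  k := MvPolynomial.C (h * c)
  l := MvPolynomial.C (h * d) * X 0
  r := MvPolynomial.C (1 + h * (1 - A)) - MvPolynomial.C (h * D) * X 0
  s := MvPolynomial.C (1 - h * A) * X 1 + MvPolynomial.C (h * B) * (X 0 * X 1)
  m := MvPolynomial.C (h * C)
  n := MvPolynomial.C (h * E) * X 1

theorem lvSystem_map_eval (x y : ℝ) :
    (lvSystem h a b c d e A B C D E).map (eval ![x, y]) =
      ⟨1 - h * (1 - a) + h * e * y, (1 + h * a) * x - h * b * (x * y), h * c, h * d * x,
        1 + h * (1 - A) - h * D * x, (1 - h * A) * y + h * B * (x * y), h * C, h * E * y⟩ := by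
  simp [lvSystem, BilinearSystem.map]

theorem lvSys_iff_isSolution {x y u v : ℝ} :
    lvSys h a b c d e A B C D E x y u v ↔
      ((lvSystem h a b c d e A B C D E).map (eval ![x, y])).IsSolution u v := by
  rw [lvSystem_map_eval]
  simp only [lvSys, IsSolution]
  constructor <;> rintro ⟨h₁, h₂⟩ <;> exact ⟨by linear_combination h₁, by linear_combination h₂⟩

theorem lvForwardRational_iff :
    lvForwardRational h a b c d e A B C D E ↔
      (lvSystem h a b c d e A B C D E).IsRationallySolvable := by
  simp only [lvForwardRational, IsRationallySolvable, lvSys_iff_isSolution]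
  exact exists₅_congr fun _ _ _ _ _ => and_congr_right fun _ => by
    rw [← FinVec.forall_iff]
    rfl

theorem lvSys_swap {x y xt yt : ℝ} :
    lvSys h a b c d e A B C D E x y xt yt ↔
      lvSys (-h) (1 - a) c b e d (1 - A) C B E D xt yt x y := by
  constructor <;> rintro ⟨h₁, h₂⟩ <;> exact ⟨by linear_combination -h₁, by linear_combination -h₂⟩

theorem lvBackwardRational_iff :
    lvBackwardRational h a b c d e A B C D E ↔
      lvForwardRational (-h) (1 - a) c b e d (1 - A) C B E D := by
  simp only [lvBackwardRational, lvForwardRational, lvSys_swap (h := h) (a := a)]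

theorem degenerate_of_lvForwardRational (hF : lvForwardRational h a b c d e A B C D E)
    (hh : h ≠ 0) (ha : 1 - h * (1 - a) ≠ 0) (hA : 1 + h * (1 - A) ≠ 0) :
    (c = 0 ∧ d * C = 0) ∨ (C = 0 ∧ c * E = 0) ∨ d * (1 - h * (1 - a)) + c * (1 + h * a) = 0 := by
  rcases (lvForwardRational_iff.1 hF).degenerate with hq | hΔ | hmk | hlk
  · have hc : c = 0 := by simpa [lvSystem, quadA, hh, hA] using congrArg (eval ![0, 0]) hq
    subst hc
    have hdC : d = 0 ∨ C = 0 := by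
      simpa [lvSystem, quadA, hh, or_comm] using congrArg (eval ![1, 0]) hq
    exact Or.inl ⟨rfl, mul_eq_zero.2 hdC⟩
  · simpa [lvSystem, discr, discrim, quadA, quadB, quadC, hA, ha] using
      congrArg (eval ![0, 0]) hΔ
  · have hC : C = 0 := by simpa [lvSystem, hh, ha] using congrArg (eval ![0, 0]) hmk
    subst hC
    have hcE : c = 0 ∨ E = 0 := by simpa [lvSystem, hh] using congrArg (eval ![0, 1]) hmk
    exact Or.inr (Or.inl ⟨rfl, mul_eq_zero.2 hcE⟩)
  · refine Or.inr (Or.inr (mul_left_cancel₀ hh ?_))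
    linear_combination (norm := (simp [lvSystem]; ring)) congrArg (eval ![1, 0]) hlk

theorem eventually_lvStep_ne_zero (a A : ℝ) :
    ∀ᶠ h in 𝓝 (0 : ℝ), 1 - h * (1 - a) ≠ 0 ∧ 1 + h * (1 - A) ≠ 0 :=
  ((by fun_prop : Continuous fun h : ℝ => 1 - h * (1 - a)).continuousAt.eventually_ne
      (by simp)).and
    ((by fun_prop : Continuous fun h : ℝ => 1 + h * (1 - A)).continuousAt.eventually_ne (by simp))

theorem lvForwardRational_of_degenerate
    (hdeg : (C = 0 ∧ E = 0) ∨ (c = 0 ∧ C = 0) ∨ (c = 0 ∧ d = 0))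
    (ha : 1 - h * (1 - a) ≠ 0) (hA : 1 + h * (1 - A) ≠ 0) :
    lvForwardRational h a b c d e A B C D E := by
  rw [lvForwardRational_iff]
  have hne {P : MvPolynomial (Fin 2) ℝ} (hP : eval ![0, 0] P ≠ 0) : P ≠ 0 := ne_zero_of_map hP
  rcases hdeg with ⟨rfl, rfl⟩ | ⟨rfl, rfl⟩ | ⟨rfl, rfl⟩
  · exact isRationallySolvable_of_m_n (by simp [lvSystem]) (by simp [lvSystem])
      (hne (by simpa [lvSystem] using hA)) (hne (by simp [lvSystem, ha, hA]))
  · exact isRationallySolvable_of_k_m (by simp [lvSystem]) (by simp [lvSystem])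
      (hne (by simp [lvSystem, ha, hA]))
  · exact isRationallySolvable_of_k_l (by simp [lvSystem]) (by simp [lvSystem])
      (hne (by simpa [lvSystem] using ha)) (hne (by simp [lvSystem, ha, hA]))

theorem eventually_lvForwardRational
    (hdeg : (C = 0 ∧ E = 0) ∨ (c = 0 ∧ C = 0) ∨ (c = 0 ∧ d = 0)) :
    ∀ᶠ h in 𝓝[≠] (0 : ℝ), lvForwardRational h a b c d e A B C D E :=
  eventually_nhdsWithin_of_eventually_nhds <| (eventually_lvStep_ne_zero a A).mono
    fun _ ⟨ha, hA⟩ => lvForwardRational_of_degenerate hdeg ha hA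

theorem degenerate_of_eventually_lvForwardRational
    (hF : ∀ᶠ h in 𝓝[≠] (0 : ℝ), lvForwardRational h a b c d e A B C D E) :
    (C = 0 ∧ E = 0) ∨ (c = 0 ∧ C = 0) ∨ (c = 0 ∧ d = 0) := by
  have hdeg : ∀ᶠ h in 𝓝[≠] (0 : ℝ), (c = 0 ∧ d * C = 0) ∨ (C = 0 ∧ c * E = 0) ∨
      d * (1 - h * (1 - a)) + c * (1 + h * a) = 0 := by
    filter_upwards [hF, eventually_mem_nhdsWithin,
      eventually_nhdsWithin_of_eventually_nhds (eventually_lvStep_ne_zero a A)]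
      with h hFh hh ⟨ha, hA⟩
    exact degenerate_of_lvForwardRational hFh hh ha hA
  by_cases hcC : (c = 0 ∧ d * C = 0) ∨ (C = 0 ∧ c * E = 0)
  · rcases hcC with ⟨rfl, hdC⟩ | ⟨rfl, hcE⟩
    · rcases mul_eq_zero.1 hdC with rfl | rfl <;> simp
    · rcases mul_eq_zero.1 hcE with rfl | rfl <;> simp
  · obtain ⟨h₁, h₂, hne, e₁, e₂⟩ :=
      (hdeg.mono fun _ hh => (or_assoc.2 hh).resolve_left hcC).exists_pair_ne
    have hca : c * a - d * (1 - a) = 0 :=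
      mul_left_cancel₀ (sub_ne_zero.2 hne) (by linear_combination e₁ - e₂)
    have hcd : c + d = 0 := by linear_combination e₁ - h₁ * hca
    exact Or.inr (Or.inr ⟨by linear_combination hca + (1 - a) * hcd,
      by linear_combination -hca + a * hcd⟩)

theorem eventually_lvBirational_iff :
    (∀ᶠ h in 𝓝[≠] (0 : ℝ),
        lvForwardRational h a b c d e A B C D E ∧ lvBackwardRational h a b c d e A B C D E) ↔
      ((C = 0 ∧ E = 0) ∨ (c = 0 ∧ C = 0) ∨ (c = 0 ∧ d = 0)) ∧
        ((B = 0 ∧ D = 0) ∨ (b = 0 ∧ B = 0) ∨ (b = 0 ∧ e = 0)) := by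
  simp only [eventually_and, lvBackwardRational_iff]
  refine ⟨fun ⟨hF, hB⟩ => ⟨degenerate_of_eventually_lvForwardRational hF, ?_⟩,
    fun ⟨hF, hB⟩ => ⟨eventually_lvForwardRational hF,
      (eventually_lvForwardRational hB).comp_neg_nhdsNE_zero⟩⟩
  have hB' : ∀ᶠ h in 𝓝[≠] (0 : ℝ), lvForwardRational h (1 - a) c b e d (1 - A) C B E D := by
    simpa only [neg_neg] using hB.comp_neg_nhdsNE_zero
  exact degenerate_of_eventually_lvForwardRational hB'

end LotkaVolterra

theorem lvDegenerate_iff_families {b c d e B C D E : ℝ}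
    (hcon1 : b + c + d + e = 1) (hcon2 : B + C + D + E = 1) :
    ((C = 0 ∧ E = 0) ∨ (c = 0 ∧ C = 0) ∨ (c = 0 ∧ d = 0)) ∧
        ((B = 0 ∧ D = 0) ∨ (b = 0 ∧ B = 0) ∨ (b = 0 ∧ e = 0)) ↔
      (b = 0 ∧ c = 0 ∧ d + e = 1 ∧ B = 0 ∧ C = 0 ∧ D + E = 1) ∨
       (b = 0 ∧ c = 0 ∧ d = 1 ∧ e = 0 ∧ C = 0 ∧ B + D + E = 1) ∨
       (b = 0 ∧ c = 0 ∧ d = 0 ∧ e = 1 ∧ B = 0 ∧ C + D + E = 1) ∨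
       (c = 0 ∧ b + d + e = 1 ∧ B = 0 ∧ C = 0 ∧ D = 0 ∧ E = 1) ∨
       (b = 0 ∧ c + d + e = 1 ∧ B = 0 ∧ C = 0 ∧ D = 1 ∧ E = 0) ∨
       (b = 0 ∧ e = 0 ∧ c + d = 1 ∧ C = 0 ∧ E = 0 ∧ B + D = 1) ∨
       (c = 0 ∧ d = 0 ∧ b + e = 1 ∧ B = 0 ∧ D = 0 ∧ C + E = 1) := by
  constructor
  · rintro ⟨⟨hC, hE⟩ | ⟨hc, hC⟩ | ⟨hc, hd⟩, ⟨hB, hD⟩ | ⟨hb, hB⟩ | ⟨hb, he⟩⟩ <;>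
      subst_vars <;> grind
  · rintro (⟨rfl, rfl, -, rfl, rfl, -⟩ | ⟨rfl, rfl, -, rfl, rfl, -⟩ | ⟨rfl, rfl, rfl, -, rfl, -⟩ |
      ⟨rfl, -, rfl, rfl, rfl, -⟩ | ⟨rfl, -, rfl, rfl, -, rfl⟩ | ⟨rfl, rfl, -, rfl, rfl, -⟩ |
      ⟨rfl, rfl, -, rfl, rfl, -⟩) <;> simp

/-- Classification of birational discrete Lotka–Volterra systems (Theorem 1 of the
paper): the general discretization with constraints `b+c+d+e = 1 = B+C+D+E` defines a
birational map of the plane for all sufficiently small `h ≠ 0` if and only if the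
parameters `{a,b,c,d,e,A,B,C,D,E}` belong to one of the seven families
(i) `{a,0,0,d,e,A,0,0,D,E}`, `d+e = 1 = D+E`;
(ii) `{a,0,0,1,0,A,B,0,D,E}`, `B+D+E = 1`;
(iii) `{a,0,0,0,1,A,0,C,D,E}`, `C+D+E = 1`;
(iv) `{a,b,0,d,e,A,0,0,0,1}`, `b+d+e = 1`;
(v) `{a,0,c,d,e,A,0,0,1,0}`, `c+d+e = 1`;
(vi) `{a,0,c,d,0,A,B,0,D,0}`, `c+d = 1 = B+D`;
(vii) `{a,b,0,0,e,A,0,C,0,E}`, `b+e = 1 = C+E`. -/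
theorem lv_birational_classification (a b c d e A B C D E : ℝ)
    (hcon1 : b + c + d + e = 1) (hcon2 : B + C + D + E = 1) :
    (∃ h₀ : ℝ, 0 < h₀ ∧ ∀ h : ℝ, h ≠ 0 → |h| < h₀ →
        lvForwardRational h a b c d e A B C D E ∧
        lvBackwardRational h a b c d e A B C D E)
    ↔ ((b = 0 ∧ c = 0 ∧ d + e = 1 ∧ B = 0 ∧ C = 0 ∧ D + E = 1) ∨
       (b = 0 ∧ c = 0 ∧ d = 1 ∧ e = 0 ∧ C = 0 ∧ B + D + E = 1) ∨
       (b = 0 ∧ c = 0 ∧ d = 0 ∧ e = 1 ∧ B = 0 ∧ C + D + E = 1) ∨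
       (c = 0 ∧ b + d + e = 1 ∧ B = 0 ∧ C = 0 ∧ D = 0 ∧ E = 1) ∨
       (b = 0 ∧ c + d + e = 1 ∧ B = 0 ∧ C = 0 ∧ D = 1 ∧ E = 0) ∨
       (b = 0 ∧ e = 0 ∧ c + d = 1 ∧ C = 0 ∧ E = 0 ∧ B + D = 1) ∨
       (c = 0 ∧ d = 0 ∧ b + e = 1 ∧ B = 0 ∧ D = 0 ∧ C + E = 1)) := by
  rw [← eventually_nhdsNE_zero_iff, eventually_lvBirational_iff]
  exact lvDegenerate_iff_families hcon1 hcon2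
end

section
/- Fix real parameters a, b and h ≠ 0. The discretization of Schnakenberg's system given by (x̃ − x)/h = a − (1/2)(x̃ + x) + x x̃ ỹ, (ỹ − y)/h = b − x² ỹ defines a birational map φ_h of the plane: explicitly, ỹ = (y + hb)/(1 + h x²) and x̃ = (x + h a − (h/2) x)/(1 + h/2 − h x ỹ) whenever the denominators are nonzero, and conversely (x, y) are given by rational functions of (x̃, ỹ) on a Zariski-dense open set. -/
/-! Both equations of the scheme are affine in each unknown separately: the `y`-equation in `ỹ`
and in `y`, the `x`-equation in `x̃` and in `x`. Solving forward for `ỹ` and then `x̃`, or backward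
for `x` and then `y`, only divides by the coefficient of the unknown. -/

namespace Schnakenberg

variable {K : Type*} [Field K] (a b h : K)

theorem yStep_iff_next_eq {x y yt : K} (hd : 1 + h * x ^ 2 ≠ 0) :
    yt - y = h * (b - x ^ 2 * yt) ↔ yt = (y + h * b) / (1 + h * x ^ 2) := by
  rw [eq_div_iff hd]
  constructor <;> intro e <;> linear_combination e

theorem yStep_iff_prev_eq {x y yt : K} :
    yt - y = h * (b - x ^ 2 * yt) ↔ y = yt * (1 + h * x ^ 2) - h * b := by
  constructor <;> intro e <;> linear_combination -e

theorem xStep_iff_next_eq {x xt yt : K} (hd : 1 + h / 2 - h * x * yt ≠ 0) :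
    xt - x = h * (a - (xt + x) / 2 + x * xt * yt) ↔
      xt = (x + h * a - (h / 2) * x) / (1 + h / 2 - h * x * yt) := by
  rw [eq_div_iff hd]
  constructor <;> intro e <;> linear_combination e

theorem xStep_iff_prev_eq {x xt yt : K} (hd : 1 - h / 2 + h * xt * yt ≠ 0) :
    xt - x = h * (a - (xt + x) / 2 + x * xt * yt) ↔
      x = (xt * (1 + h / 2) - h * a) / (1 - h / 2 + h * xt * yt) := by
  rw [eq_div_iff hd]
  constructor <;> intro e <;> linear_combination -e

end Schnakenberg

open Schnakenberg in
theorem schnakenberg_birational_general (a b h : ℝ) :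
    (∀ x y xt yt : ℝ,
      1 + h * x ^ 2 ≠ 0 →
      1 + h / 2 - h * x * ((y + h * b) / (1 + h * x ^ 2)) ≠ 0 →
      ((xt - x = h * (a - (xt + x) / 2 + x * xt * yt) ∧
        yt - y = h * (b - x ^ 2 * yt)) ↔
       (yt = (y + h * b) / (1 + h * x ^ 2) ∧
        xt = (x + h * a - (h / 2) * x) / (1 + h / 2 - h * x * yt))))
    ∧ (∀ xt yt : ℝ,
        1 - h / 2 + h * xt * yt ≠ 0 →
        ∀ x y : ℝ,
          ((xt - x = h * (a - (xt + x) / 2 + x * xt * yt) ∧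
            yt - y = h * (b - x ^ 2 * yt)) ↔
           (x = (xt * (1 + h / 2) - h * a) / (1 - h / 2 + h * xt * yt) ∧
            y = yt * (1 + h * x ^ 2) - h * b))) := by
  refine ⟨fun x y xt yt hy hx => ?_, fun xt yt hd x y => ?_⟩
  · rw [and_comm, yStep_iff_next_eq b h hy]
    refine and_congr_right fun hyt => ?_
    subst hyt
    exact xStep_iff_next_eq a h hx
  · exact and_congr (xStep_iff_prev_eq a h hd) (yStep_iff_prev_eq b h)

/-- The non-standard discretization of Schnakenberg's system
`ẋ = a - x + x²y`, `ẏ = b - x²y`, given by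
`(x̃-x)/h = a - (x̃+x)/2 + x x̃ ỹ`, `(ỹ-y)/h = b - x² ỹ`, defines a birational map of
the plane: explicitly `ỹ = (y + hb)/(1 + hx²)` and
`x̃ = (x + ha - (h/2)x)/(1 + h/2 - h x ỹ)` whenever the denominators are nonzero, and
conversely `(x,y)` are rational functions of `(x̃,ỹ)` on a Zariski-dense open set:
`x = (x̃(1 + h/2) - ha)/(1 - h/2 + h x̃ ỹ)`, `y = ỹ(1 + hx²) - hb`. -/
theorem schnakenberg_birational (a b h : ℝ) (hh : h ≠ 0) :
    (∀ x y xt yt : ℝ,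
      1 + h * x ^ 2 ≠ 0 →
      1 + h / 2 - h * x * ((y + h * b) / (1 + h * x ^ 2)) ≠ 0 →
      ((xt - x = h * (a - (xt + x) / 2 + x * xt * yt) ∧
        yt - y = h * (b - x ^ 2 * yt)) ↔
       (yt = (y + h * b) / (1 + h * x ^ 2) ∧
        xt = (x + h * a - (h / 2) * x) / (1 + h / 2 - h * x * yt))))
    ∧ (∀ xt yt : ℝ,
        1 - h / 2 + h * xt * yt ≠ 0 →
        ∀ x y : ℝ,
          ((xt - x = h * (a - (xt + x) / 2 + x * xt * yt) ∧
            yt - y = h * (b - x ^ 2 * yt)) ↔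
           (x = (xt * (1 + h / 2) - h * a) / (1 - h / 2 + h * xt * yt) ∧
            y = yt * (1 + h * x ^ 2) - h * b))) :=
  schnakenberg_birational_general a b h
end
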